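/- Let M ∈ ℝ^{n×n}, and let P, Q ∈ ℝ^{n×n} be symmetric with P positive semidefinite and MᵀPM − P ⪯ −Q. Then for all vectors e, v ∈ ℝⁿ: (Me + v)ᵀP(Me + v) − eᵀP e ≤ −λmin(Q)·‖e‖² + λmax(P)·‖v‖² + 2·‖PM‖_F·‖e‖·‖v‖. -/

import Mathlib

/-!
Since `P` is symmetric, `V(Me + v) = V(Me) + 2⟪v, PMe⟫ + V(v)` for `V(x) = xᵀPx`. The Lyapunov
inequality gives `V(Me) - V(e) ≤ -eᵀQe ≤ -λmin(Q)‖e‖²`, while `V(v) ≤ λmax(P)‖v‖²`, and the cross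
term is bounded by Cauchy–Schwarz twice: `⟪v, PMe⟫ ≤ ‖v‖‖PMe‖` and `‖PMe‖ ≤ ‖PM‖_F‖e‖` (row by
row). The eigenvalue bounds come from expanding `xᵀAx` in an orthonormal eigenbasis of `A`.
-/

open Matrix MeasureTheory Filter

noncomputable def lamMin {n : ℕ} (A : Matrix (Fin n) (Fin n) ℝ) : ℝ :=
  sInf (spectrum ℝ A)

noncomputable def lamMax {n : ℕ} (A : Matrix (Fin n) (Fin n) ℝ) : ℝ :=
  sSup (spectrum ℝ A)

noncomputable def frobNorm {m n : ℕ} (M : Matrix (Fin m) (Fin n) ℝ) : ℝ :=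
  Real.sqrt (∑ i, ∑ j, (M i j) ^ 2)

noncomputable def mulVecE {m n : ℕ} (M : Matrix (Fin m) (Fin n) ℝ)
    (x : EuclideanSpace ℝ (Fin n)) : EuclideanSpace ℝ (Fin m) :=
  Matrix.toEuclideanLin M x

noncomputable def quadForm {n : ℕ} (P : Matrix (Fin n) (Fin n) ℝ)
    (x : EuclideanSpace ℝ (Fin n)) : ℝ :=
  inner ℝ x (mulVecE P x)

noncomputable def opNorm {m n : ℕ} (p : Matrix (Fin m) (Fin n) ℝ) : ℝ :=
  ‖LinearMap.toContinuousLinearMap (Matrix.toEuclideanLin p)‖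

section

variable {l m n : ℕ}

lemma mulVecE_add (A : Matrix (Fin m) (Fin n) ℝ) (x y : EuclideanSpace ℝ (Fin n)) :
    mulVecE A (x + y) = mulVecE A x + mulVecE A y :=
  map_add _ x y

lemma mulVecE_sub (A B : Matrix (Fin m) (Fin n) ℝ) (x : EuclideanSpace ℝ (Fin n)) :
    mulVecE (A - B) x = mulVecE A x - mulVecE B x := by
  simp [mulVecE]

lemma mulVecE_mul (A : Matrix (Fin l) (Fin m) ℝ) (B : Matrix (Fin m) (Fin n) ℝ)
    (x : EuclideanSpace ℝ (Fin n)) :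
    mulVecE (A * B) x = mulVecE A (mulVecE B x) := by
  simp [mulVecE, toLpLin_mul (q := 2)]

lemma inner_mulVecE_transpose (A : Matrix (Fin m) (Fin n) ℝ) (x : EuclideanSpace ℝ (Fin n))
    (y : EuclideanSpace ℝ (Fin m)) :
    inner ℝ x (mulVecE Aᵀ y) = inner ℝ (mulVecE A x) y := by
  rw [mulVecE, ← conjTranspose_eq_transpose_of_trivial,
    toEuclideanLin_conjTranspose_eq_adjoint, LinearMap.adjoint_inner_right, mulVecE]

lemma quadForm_sub (A B : Matrix (Fin n) (Fin n) ℝ) (x : EuclideanSpace ℝ (Fin n)) :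
    quadForm (A - B) x = quadForm A x - quadForm B x := by
  rw [quadForm, mulVecE_sub, inner_sub_right, quadForm, quadForm]

lemma quadForm_transpose_mul_mul (M : Matrix (Fin m) (Fin n) ℝ) (P : Matrix (Fin m) (Fin m) ℝ)
    (x : EuclideanSpace ℝ (Fin n)) :
    quadForm (Mᵀ * P * M) x = quadForm P (mulVecE M x) := by
  rw [quadForm, Matrix.mul_assoc, mulVecE_mul, inner_mulVecE_transpose, mulVecE_mul,
    quadForm, real_inner_comm]

lemma Matrix.PosSemidef.quadForm_nonneg {A : Matrix (Fin n) (Fin n) ℝ} (hA : A.PosSemidef)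
    (x : EuclideanSpace ℝ (Fin n)) : 0 ≤ quadForm A x :=
  (isPositive_toEuclideanLin_iff.2 hA).inner_nonneg_right x

lemma Matrix.IsHermitian.inner_mulVecE_comm {A : Matrix (Fin n) (Fin n) ℝ} (hA : A.IsHermitian)
    (x y : EuclideanSpace ℝ (Fin n)) :
    inner ℝ x (mulVecE A y) = inner ℝ (mulVecE A x) y :=
  (isSymmetric_toEuclideanLin_iff.2 hA x y).symm

lemma Matrix.IsHermitian.quadForm_add {A : Matrix (Fin n) (Fin n) ℝ} (hA : A.IsHermitian)
    (x y : EuclideanSpace ℝ (Fin n)) :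
    quadForm A (x + y) = quadForm A x + 2 * inner ℝ y (mulVecE A x) + quadForm A y := by
  have hsymm : inner ℝ x (mulVecE A y) = inner ℝ y (mulVecE A x) := by
    rw [hA.inner_mulVecE_comm, real_inner_comm]
  simp only [quadForm, mulVecE_add, inner_add_left, inner_add_right, hsymm]
  ring

lemma Matrix.IsHermitian.quadForm_eq_sum_eigenvalues {A : Matrix (Fin n) (Fin n) ℝ}
    (hA : A.IsHermitian) (x : EuclideanSpace ℝ (Fin n)) :
    quadForm A x = ∑ i, hA.eigenvalues i * inner ℝ x (hA.eigenvectorBasis i) ^ 2 := by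
  set b := hA.eigenvectorBasis
  have hb : ∀ i, mulVecE A (b i) = hA.eigenvalues i • b i := fun i => by
    ext j
    simpa [mulVecE, toLpLin_apply] using congrFun (hA.mulVec_eigenvectorBasis i) j
  rw [quadForm, ← b.sum_inner_mul_inner]
  refine Finset.sum_congr rfl fun i _ => ?_
  rw [hA.inner_mulVecE_comm, hb, real_inner_smul_left, real_inner_comm (b i)]
  ring

lemma Matrix.IsHermitian.lamMin_mul_norm_sq_le_quadForm {A : Matrix (Fin n) (Fin n) ℝ}
    (hA : A.IsHermitian) (x : EuclideanSpace ℝ (Fin n)) :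
    lamMin A * ‖x‖ ^ 2 ≤ quadForm A x := by
  rw [hA.quadForm_eq_sum_eigenvalues, ← hA.eigenvectorBasis.sum_sq_inner_left, Finset.mul_sum]
  gcongr with i
  exact csInf_le finite_real_spectrum.bddBelow (hA.eigenvalues_mem_spectrum_real i)

lemma Matrix.IsHermitian.quadForm_le_lamMax_mul_norm_sq {A : Matrix (Fin n) (Fin n) ℝ}
    (hA : A.IsHermitian) (x : EuclideanSpace ℝ (Fin n)) :
    quadForm A x ≤ lamMax A * ‖x‖ ^ 2 := by
  rw [hA.quadForm_eq_sum_eigenvalues, ← hA.eigenvectorBasis.sum_sq_inner_left, Finset.mul_sum]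
  gcongr with i
  exact le_csSup finite_real_spectrum.bddAbove (hA.eigenvalues_mem_spectrum_real i)

lemma norm_mulVecE_le_frobNorm (A : Matrix (Fin m) (Fin n) ℝ) (x : EuclideanSpace ℝ (Fin n)) :
    ‖mulVecE A x‖ ≤ frobNorm A * ‖x‖ := by
  refine le_of_pow_le_pow_left₀ two_ne_zero (by unfold frobNorm; positivity) ?_
  rw [mul_pow, frobNorm, Real.sq_sqrt (by positivity), EuclideanSpace.norm_sq_eq,
    EuclideanSpace.norm_sq_eq, Finset.sum_mul]
  gcongr with i
  simpa [mulVecE, toLpLin_apply, mulVec, dotProduct] using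
    Finset.sum_mul_sq_le_sq_mul_sq Finset.univ (A i) x

lemma inner_mulVecE_le_frobNorm (A : Matrix (Fin m) (Fin n) ℝ) (x : EuclideanSpace ℝ (Fin n))
    (y : EuclideanSpace ℝ (Fin m)) :
    inner ℝ y (mulVecE A x) ≤ frobNorm A * ‖x‖ * ‖y‖ :=
  calc inner ℝ y (mulVecE A x) ≤ ‖y‖ * ‖mulVecE A x‖ := real_inner_le_norm _ _
    _ ≤ ‖y‖ * (frobNorm A * ‖x‖) := by gcongr; exact norm_mulVecE_le_frobNorm A x
    _ = frobNorm A * ‖x‖ * ‖y‖ := by ring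

lemma quadForm_mulVecE_sub_quadForm_le {M P Q : Matrix (Fin n) (Fin n) ℝ} (hQ : Q.IsHermitian)
    (hLyap : (P - Mᵀ * P * M - Q).PosSemidef) (x : EuclideanSpace ℝ (Fin n)) :
    quadForm P (mulVecE M x) - quadForm P x ≤ -lamMin Q * ‖x‖ ^ 2 := by
  have hdecr := hLyap.quadForm_nonneg x
  rw [quadForm_sub, quadForm_sub, quadForm_transpose_mul_mul] at hdecr
  linarith [hQ.lamMin_mul_norm_sq_le_quadForm x]

end

/-- Key one-step estimate in the proofs of Theorems 1 and 3: Lyapunov difference along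
perturbed linear dynamics e⁺ = Me + v. -/
theorem stmt_9 {n : ℕ}
    (M P Q : Matrix (Fin n) (Fin n) ℝ)
    (hP : P.PosSemidef) (hQ : Q.IsHermitian)
    (hLyap : (P - Mᵀ * P * M - Q).PosSemidef) :
    ∀ e v : EuclideanSpace ℝ (Fin n),
      quadForm P (mulVecE M e + v) - quadForm P e ≤
        -lamMin Q * ‖e‖ ^ 2 + lamMax P * ‖v‖ ^ 2 + 2 * frobNorm (P * M) * ‖e‖ * ‖v‖ := by
  intro e v
  have hcross := inner_mulVecE_le_frobNorm (P * M) e v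
  rw [mulVecE_mul] at hcross
  rw [hP.isHermitian.quadForm_add]
  linarith [quadForm_mulVecE_sub_quadForm_le hQ hLyap e,
    hP.isHermitian.quadForm_le_lamMax_mul_norm_sq v]
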